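/- Let p = [b_1^{a_1} ⋯ b_r^{a_r}] (with b_1 ≥ ⋯ ≥ b_r) be an orthogonal partition of 2n. Let q be the subpartition of p consisting of all parts b_i with b_i odd and s the subpartition consisting of all parts b_i with b_i even, and write |q| = 2n_1 and |s| = 2n_2, so that n = n_1 + n_2. Then (2n² − n) − dim_D((p^t)_{SO_{2n}}) = (2n_1² − n_1) + (2n_2² − n_2) − dim_D((q^t)_{SO_{2n_1}}) − dim_D((s^t)_{SO_{2n_2}}). (This is the SO_{2n} case of the dimension identity for nilpotent orbits; (p^t)_{SO_{2n}} is the Barbasch–Vogan dual of p.) -/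

import Mathlib

/-!
Write `g_k = s_{k+1}(p)` for the columns of `p`, i.e. the rows of `p^t`. The `SO`-collapse of
`p^t` is explicit: its first `m` rows hold `g_0 + ⋯ + g_{m-1} - ε_m` boxes, where `ε_m ∈ {0, 1}`
is `1` exactly when `m` is an odd part of `p` or an odd number of odd parts are `≥ m`.
The partition with these rows is orthogonal, because at each of its corners the number of boxes
above has the parity of the number of rows. Conversely, an orthogonal partition dominated by
`p^t` cannot reach `g_0 + ⋯ + g_{m-1}` where `ε_m = 1`: that would give an even column at which
it reaches this bound with an odd number of boxes of `p` beyond, and corner parity propagates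
this two columns at a time until no boxes are left.

Summation by parts then turns `(|p|² - |p|)/2 - dim_D` into
`½ Σ (2k+1) g_k + Σ ε_k - ½ #{k : row k odd}`, and each term is additive over the splitting of
`p` into odd and even parts: `g` is additive, `ε` only sees the odd parts, and the even parts,
which come in pairs, contribute even rows and no `ε`.
-/

namespace JiangWF

/-- `sCount p i` : the number of parts of `p` that are `≥ i`. -/
def sCount (p : Multiset ℕ) (i : ℕ) : ℕ := (p.filter (fun a => i ≤ a)).card

/-- `rCount p i` : the number of parts of `p` equal to `i`. -/
def rCount (p : Multiset ℕ) (i : ℕ) : ℕ := p.count i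

/-- The largest part of `p` (`0` for the empty partition). -/
def maxPart (p : Multiset ℕ) : ℕ := p.sup

/-- The smallest part of `p` (`0` for the empty partition). -/
noncomputable def minPart (p : Multiset ℕ) : ℕ := sInf {a : ℕ | a ∈ p}

/-- The transpose partition: its `i`-th part is `sCount p i`, for `1 ≤ i ≤ maxPart p`. -/
def transpose (p : Multiset ℕ) : Multiset ℕ :=
  (Multiset.range (maxPart p)).map fun i => sCount p (i + 1)

/-- The sum of the `m` largest parts of `p`. -/
def topSum (p : Multiset ℕ) (m : ℕ) : ℕ :=
  ∑ i ∈ Finset.Icc 1 p.sum, min m (sCount p i)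

/-- Dominance order: `domLE p q` means `p ≤ q`. -/
def domLE (p q : Multiset ℕ) : Prop := ∀ m, topSum p m ≤ topSum q m

/-- `p` is a partition of `N`: all parts positive, summing to `N`. -/
def IsPartitionOf (p : Multiset ℕ) (N : ℕ) : Prop := (∀ a ∈ p, 0 < a) ∧ p.sum = N

/-- Symplectic partition: every odd part occurs with even multiplicity. -/
def IsSymplectic (p : Multiset ℕ) : Prop := ∀ a, a % 2 = 1 → Even (p.count a)

/-- Orthogonal partition: every even part occurs with even multiplicity. -/
def IsOrthogonal (p : Multiset ℕ) : Prop := ∀ a, a % 2 = 0 → Even (p.count a)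

/-- `p^-`: decrease the smallest part by one (deleting it if it becomes `0`). -/
noncomputable def pMinus (p : Multiset ℕ) : Multiset ℕ :=
  if minPart p ≤ 1 then p.erase (minPart p)
  else (minPart p - 1) ::ₘ p.erase (minPart p)

/-- `p^+`: increase the largest part by one. -/
def pPlus (p : Multiset ℕ) : Multiset ℕ := (maxPart p + 1) ::ₘ p.erase (maxPart p)

/-- `p^{+-}`: increase the largest part by one and decrease the smallest by one. -/
noncomputable def pPM (p : Multiset ℕ) : Multiset ℕ := pMinus (pPlus p)

/-- `p₁ = [⌊b_1/2⌋^{a_1} ⋯ ⌊b_r/2⌋^{a_r}]^t` (discarding zero entries before transposing). -/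
def pOne (p : Multiset ℕ) : Multiset ℕ :=
  transpose ((p.map fun b => b / 2).filter fun x => 0 < x)

/-- `Σ_{i : b_i odd} a_i`: the number of odd parts of `p`. -/
def oddMult (p : Multiset ℕ) : ℕ := (p.filter fun a => a % 2 = 1).card

/-- `n* = ⌊(Σ_{i : b_i odd} a_i)/2⌋`. -/
def nStar (p : Multiset ℕ) : ℕ := oddMult p / 2

/-- Append an extra part `m` to `q`, omitted if `m = 0`. -/
def addPart (m : ℕ) (q : Multiset ℕ) : Multiset ℕ := if m = 0 then q else m ::ₘ q

/-- `c` is the `Sp`-collapse of `p`: the maximal symplectic partition `≤ p` in dominance. -/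
def IsSpCollapse (p c : Multiset ℕ) : Prop :=
  IsPartitionOf c p.sum ∧ IsSymplectic c ∧ domLE c p ∧
    ∀ c', IsPartitionOf c' p.sum → IsSymplectic c' → domLE c' p → domLE c' c

/-- `c` is the `SO`-collapse of `p`: the maximal orthogonal partition `≤ p` in dominance. -/
def IsSOCollapse (p c : Multiset ℕ) : Prop :=
  IsPartitionOf c p.sum ∧ IsOrthogonal c ∧ domLE c p ∧
    ∀ c', IsPartitionOf c' p.sum → IsOrthogonal c' → domLE c' p → domLE c' c

/-- `e` is the `Sp`-expansion of `p`: the minimal special symplectic partition `≥ p`. -/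
def IsSpExpansion (p e : Multiset ℕ) : Prop :=
  IsPartitionOf e p.sum ∧ IsSymplectic e ∧ IsSymplectic (transpose e) ∧ domLE p e ∧
    ∀ e', IsPartitionOf e' p.sum → IsSymplectic e' → IsSymplectic (transpose e') →
      domLE p e' → domLE e e'

/-- `e` is the `SO_{2n+1}`-expansion of `p`: the minimal special orthogonal partition `≥ p`
(odd case: special means the transpose is orthogonal). -/
def IsSOOddExpansion (p e : Multiset ℕ) : Prop :=
  IsPartitionOf e p.sum ∧ IsOrthogonal e ∧ IsOrthogonal (transpose e) ∧ domLE p e ∧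
    ∀ e', IsPartitionOf e' p.sum → IsOrthogonal e' → IsOrthogonal (transpose e') →
      domLE p e' → domLE e e'

/-- `e` is the `SO_{2n}`-expansion of `p`: the minimal special orthogonal partition `≥ p`
(even case: special means the transpose is symplectic). -/
def IsSOEvenExpansion (p e : Multiset ℕ) : Prop :=
  IsPartitionOf e p.sum ∧ IsOrthogonal e ∧ IsSymplectic (transpose e) ∧ domLE p e ∧
    ∀ e', IsPartitionOf e' p.sum → IsOrthogonal e' → IsSymplectic (transpose e') →
      domLE p e' → domLE e e'

/-- `dim_C(q)` for a symplectic partition `q` of `2k`: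
`2k² + k − (1/2)Σ s_i(q)² − (1/2)Σ_{i odd} r_i(q)` (note `2k² + k = (|q|² + |q|)/2`). -/
def dimC (p : Multiset ℕ) : ℚ :=
  ((p.sum : ℚ) ^ 2 + (p.sum : ℚ)) / 2
    - (∑ i ∈ Finset.Icc 1 p.sum, (sCount p i : ℚ) ^ 2) / 2
    - (∑ i ∈ Finset.Icc 1 p.sum, if i % 2 = 1 then (rCount p i : ℚ) else 0) / 2

/-- `dim_B(q)` for an orthogonal partition `q` of `2k+1`:
`2k² + k − (1/2)Σ s_i(q)² + (1/2)Σ_{i odd} r_i(q)` (note `2k² + k = (|q|² − |q|)/2`). -/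
def dimB (p : Multiset ℕ) : ℚ :=
  ((p.sum : ℚ) ^ 2 - (p.sum : ℚ)) / 2
    - (∑ i ∈ Finset.Icc 1 p.sum, (sCount p i : ℚ) ^ 2) / 2
    + (∑ i ∈ Finset.Icc 1 p.sum, if i % 2 = 1 then (rCount p i : ℚ) else 0) / 2

/-- `dim_D(q)` for an orthogonal partition `q` of `2k`:
`2k² − k − (1/2)Σ s_i(q)² + (1/2)Σ_{i odd} r_i(q)` (note `2k² − k = (|q|² − |q|)/2`). -/
def dimD (p : Multiset ℕ) : ℚ :=
  ((p.sum : ℚ) ^ 2 - (p.sum : ℚ)) / 2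
    - (∑ i ∈ Finset.Icc 1 p.sum, (sCount p i : ℚ) ^ 2) / 2
    + (∑ i ∈ Finset.Icc 1 p.sum, if i % 2 = 1 then (rCount p i : ℚ) else 0) / 2


open Finset

theorem sCount_zero (i : ℕ) : sCount 0 i = 0 := rfl

theorem sCount_cons (a : ℕ) (x : Multiset ℕ) (i : ℕ) :
    sCount (a ::ₘ x) i = sCount x i + if i ≤ a then 1 else 0 := by
  simp only [sCount, Multiset.filter_cons]
  split <;> simp

theorem sCount_add (x y : Multiset ℕ) (i : ℕ) : sCount (x + y) i = sCount x i + sCount y i := by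
  simp only [sCount, Multiset.filter_add, Multiset.card_add]

theorem sCount_antitone (x : Multiset ℕ) : Antitone (sCount x) := fun _ _ hij =>
  Multiset.card_le_card (x.monotone_filter_right fun _ h => hij.trans h)

theorem sCount_filter_le (x : Multiset ℕ) (p : ℕ → Prop) [DecidablePred p] (i : ℕ) :
    sCount (x.filter p) i ≤ sCount x i :=
  Multiset.card_le_card (Multiset.filter_le_filter _ (Multiset.filter_le p x))

theorem sCount_filter_ge (x : Multiset ℕ) (w i : ℕ) :
    sCount (x.filter (w ≤ ·)) i = sCount x (max i w) := by
  simp only [sCount, Multiset.filter_filter, max_le_iff]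

theorem sCount_eq_rCount_add (x : Multiset ℕ) (i : ℕ) :
    sCount x i = rCount x i + sCount x (i + 1) := by
  induction x using Multiset.induction with
  | empty => rfl
  | cons a x ih =>
    simp only [sCount_cons, rCount, Multiset.count_cons] at ih ⊢
    split_ifs <;> omega

theorem exists_mem_le_of_sCount_pos {x : Multiset ℕ} {i : ℕ} (h : 0 < sCount x i) :
    ∃ a ∈ x, i ≤ a := by
  obtain ⟨a, ha⟩ := Multiset.card_pos_iff_exists_mem.mp h
  exact ⟨a, Multiset.mem_of_mem_filter ha, (Multiset.mem_filter.mp ha).2⟩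

theorem sCount_eq_zero_of_sum_lt {x : Multiset ℕ} {i : ℕ} (h : x.sum < i) : sCount x i = 0 := by
  by_contra hne
  obtain ⟨a, ha, hia⟩ := exists_mem_le_of_sCount_pos (Nat.pos_of_ne_zero hne)
  have := Multiset.le_sum_of_mem ha
  omega

theorem sCount_one_le_sum (x : Multiset ℕ) : sCount x 1 ≤ x.sum := by
  induction x using Multiset.induction with
  | empty => rfl
  | cons a x ih =>
    rw [sCount_cons, Multiset.sum_cons]
    split_ifs <;> omega

theorem sCount_le_sum (x : Multiset ℕ) {i : ℕ} (hi : 1 ≤ i) : sCount x i ≤ x.sum :=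
  (sCount_antitone x hi).trans (sCount_one_le_sum x)

theorem card_filter_Icc_le {N v : ℕ} (h : v ≤ N) : #{i ∈ Icc 1 N | i ≤ v} = v := by
  rw [show {i ∈ Icc 1 N | i ≤ v} = Icc 1 v by ext i; simp only [mem_filter, mem_Icc]; omega]
  simp

theorem sum_sCount_Icc (x : Multiset ℕ) {B : ℕ} (hB : ∀ a ∈ x, a ≤ B) :
    ∑ i ∈ Icc 1 B, sCount x i = x.sum := by
  induction x using Multiset.induction with
  | empty => simp [sCount_zero]
  | cons a x ih =>
    have hcount : ∑ i ∈ Icc 1 B, (if i ≤ a then 1 else 0) = a := by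
      rw [sum_boole, card_filter_Icc_le (hB a (Multiset.mem_cons_self a x)), Nat.cast_id]
    simp only [sCount_cons, sum_add_distrib, hcount, Multiset.sum_cons,
      ih fun b hb => hB b (Multiset.mem_cons_of_mem hb)]
    omega

theorem even_sum_map_of_even_count (x : Multiset ℕ) (φ : ℕ → ℕ) (hx : ∀ v, Even (x.count v)) :
    Even (x.map φ).sum := by
  rw [Finset.sum_multiset_map_count]
  exact Finset.even_sum _ fun v _ => by rw [smul_eq_mul]; exact (hx v).mul_right _

theorem even_card_of_even_count (x : Multiset ℕ) (hx : ∀ v, Even (x.count v)) :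
    Even (Multiset.card x) := by
  rw [← Multiset.toFinset_sum_count_eq]
  exact Finset.even_sum _ fun v _ => hx v

theorem sum_mod_two_of_forall_odd {x : Multiset ℕ} (hx : ∀ a ∈ x, a % 2 = 1) :
    x.sum % 2 = Multiset.card x % 2 := by
  induction x using Multiset.induction with
  | empty => rfl
  | cons a x ih =>
    have ha := hx a (Multiset.mem_cons_self a x)
    have := ih fun b hb => hx b (Multiset.mem_cons_of_mem hb)
    simp only [Multiset.sum_cons, Multiset.card_cons]
    omega

def oddParts (x : Multiset ℕ) : Multiset ℕ := x.filter fun a => a % 2 = 1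

def evenParts (x : Multiset ℕ) : Multiset ℕ := x.filter fun a => a % 2 = 0

theorem oddParts_add_evenParts (x : Multiset ℕ) : oddParts x + evenParts x = x := by
  have : evenParts x = x.filter fun a => ¬ a % 2 = 1 := Multiset.filter_congr fun a _ => by omega
  rw [this, oddParts, Multiset.filter_add_not]

theorem mod_two_of_mem_oddParts {x : Multiset ℕ} {a : ℕ} (h : a ∈ oddParts x) : a % 2 = 1 :=
  (Multiset.mem_filter.mp h).2

theorem rCount_oddParts_of_even (x : Multiset ℕ) {k : ℕ} (hk : k % 2 = 0) :
    rCount (oddParts x) k = 0 := by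
  rw [rCount, oddParts, Multiset.count_filter, if_neg (by omega)]

theorem rCount_oddParts_of_odd (x : Multiset ℕ) {k : ℕ} (hk : k % 2 = 1) :
    rCount (oddParts x) k = rCount x k := by
  rw [rCount, rCount, oddParts, Multiset.count_filter, if_pos hk]

theorem rCount_oddParts_le (x : Multiset ℕ) (k : ℕ) : rCount (oddParts x) k ≤ rCount x k :=
  Multiset.count_le_of_le _ (Multiset.filter_le _ x)

theorem IsOrthogonal.filter {x : Multiset ℕ} (hx : IsOrthogonal x) (p : ℕ → Prop)
    [DecidablePred p] : IsOrthogonal (x.filter p) := by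
  intro a ha
  rw [Multiset.count_filter]
  split_ifs
  · exact hx a ha
  · exact Even.zero

theorem IsOrthogonal.even_count_evenParts {x : Multiset ℕ} (hx : IsOrthogonal x) (v : ℕ) :
    Even ((evenParts x).count v) := by
  rw [evenParts, Multiset.count_filter]
  split_ifs with h
  · exact hx v h
  · exact Even.zero

theorem IsOrthogonal.sum_mod_two {x : Multiset ℕ} (hx : IsOrthogonal x) :
    x.sum % 2 = Multiset.card x % 2 := by
  have hodd := sum_mod_two_of_forall_odd fun a ha => mod_two_of_mem_oddParts (x := x) ha
  have hsum := (even_sum_map_of_even_count _ id hx.even_count_evenParts).two_dvd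
  have hcard := (even_card_of_even_count _ hx.even_count_evenParts).two_dvd
  rw [Multiset.map_id] at hsum
  rw [← oddParts_add_evenParts x, Multiset.sum_add, Multiset.card_add]
  omega

theorem _root_.Antitone.sum_range_sum_range_min {f : ℕ → ℕ} (hf : Antitone f) (M : ℕ) :
    ∑ k ∈ range M, ∑ l ∈ range M, min (f k) (f l) = ∑ k ∈ range M, (2 * k + 1) * f k := by
  induction M with
  | zero => simp
  | succ M ih =>
    have hlast : ∀ k ∈ range (M + 1), min (f k) (f M) = f M := fun k hk =>
      min_eq_right (hf (Nat.lt_succ_iff.mp (mem_range.mp hk)))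
    have hcol : ∑ k ∈ range M, ∑ l ∈ range (M + 1), min (f k) (f l) =
        ∑ k ∈ range M, ∑ l ∈ range M, min (f k) (f l) + M * f M := by
      simp only [sum_range_succ _ M, sum_add_distrib]
      rw [sum_congr rfl fun k hk => hlast k (mem_range_succ_iff.mpr (mem_range.mp hk).le),
        sum_const, card_range, smul_eq_mul]
    rw [sum_range_succ, hcol, ih, sum_congr rfl fun l hl => (min_comm _ _).trans (hlast l hl),
      sum_const, card_range, smul_eq_mul, sum_range_succ]
    ring

/-- `f k` is the `k`-th largest part of `x` (counting from `0`, and `0` once the parts run out),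
characterised through its Galois connection with `sCount x`. -/
def IsRowLengths (x : Multiset ℕ) (f : ℕ → ℕ) : Prop :=
  ∀ i k, 1 ≤ i → (i ≤ f k ↔ k < sCount x i)

def rowLengths (x : Multiset ℕ) (k : ℕ) : ℕ := #{i ∈ Icc 1 x.sum | k < sCount x i}

theorem isRowLengths_rowLengths (x : Multiset ℕ) : IsRowLengths x (rowLengths x) := by
  intro i k hi
  constructor
  · intro h
    by_contra hk
    have hsub : {i' ∈ Icc 1 x.sum | k < sCount x i'} ⊆ Icc 1 (i - 1) := fun i' hi' => by
      rw [mem_filter, mem_Icc] at hi'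
      rw [mem_Icc]
      by_contra
      have := sCount_antitone x (show i ≤ i' by omega)
      omega
    have := card_le_card hsub
    simp only [rowLengths, Nat.card_Icc] at this h
    omega
  · intro hk
    obtain ⟨a, ha, hia⟩ := exists_mem_le_of_sCount_pos (show 0 < sCount x i by omega)
    have hiN := hia.trans (Multiset.le_sum_of_mem ha)
    have hsub : Icc 1 i ⊆ {i' ∈ Icc 1 x.sum | k < sCount x i'} := fun i' hi' => by
      rw [mem_Icc] at hi'
      have := sCount_antitone x hi'.2
      rw [mem_filter, mem_Icc]; omega
    simpa [rowLengths] using card_le_card hsub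

namespace IsRowLengths

variable {x : Multiset ℕ} {f g : ℕ → ℕ}

theorem antitone (hf : IsRowLengths x f) : Antitone f := by
  intro k l hkl
  by_contra h
  have := (hf (f l) l (by omega)).mp le_rfl
  have := (hf (f l) k (by omega)).mpr (by omega)
  omega

theorem le_sum (hf : IsRowLengths x f) (k : ℕ) : f k ≤ x.sum := by
  by_contra h
  have := (hf (f k) k (by omega)).mp le_rfl
  rw [sCount_eq_zero_of_sum_lt (by omega)] at this
  omega

theorem card_filter_range (hf : IsRowLengths x f) {i : ℕ} (hi : 1 ≤ i) (m : ℕ) :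
    #{k ∈ range m | i ≤ f k} = min m (sCount x i) := by
  rw [show {k ∈ range m | i ≤ f k} = range (min m (sCount x i)) by
    ext k; simp only [mem_filter, mem_range, hf i k hi, lt_min_iff]]
  exact card_range _

theorem topSum_eq (hf : IsRowLengths x f) (m : ℕ) : topSum x m = ∑ k ∈ range m, f k :=
  calc topSum x m = ∑ i ∈ Icc 1 x.sum, ∑ k ∈ range m, if i ≤ f k then 1 else 0 := by
        refine sum_congr rfl fun i hi => ?_
        rw [sum_boole, hf.card_filter_range (mem_Icc.mp hi).1, Nat.cast_id]
    _ = ∑ k ∈ range m, ∑ i ∈ Icc 1 x.sum, if i ≤ f k then 1 else 0 := sum_comm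
    _ = ∑ k ∈ range m, f k := sum_congr rfl fun k _ => by
        rw [sum_boole, card_filter_Icc_le (hf.le_sum k), Nat.cast_id]

theorem of_topSum_eq (hf : IsRowLengths x f) (hg : ∀ m, topSum x m = ∑ k ∈ range m, g k) :
    IsRowLengths x g := by
  have hfg : f = g := funext fun k => by
    have h1 := hf.topSum_eq (k + 1)
    have h0 := hf.topSum_eq k
    rw [sum_range_succ, ← h0, hg (k + 1), hg k, sum_range_succ] at h1
    omega
  exact hfg ▸ hf

/-- At a corner the top rows form an orthogonal partition, whose size and number of parts agree
mod 2. -/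
theorem topSum_mod_two_of_lt (hf : IsRowLengths x f) (hx : IsOrthogonal x) {b : ℕ}
    (hb : f (b + 1) < f b) : topSum x (b + 1) % 2 = (b + 1) % 2 := by
  set w := f (b + 1)
  have hw : sCount x (w + 1) = b + 1 := by
    have := (hf (w + 1) b (by omega)).mp hb
    have := (hf (w + 1) (b + 1) (by omega)).not.mp (by omega)
    omega
  set y := x.filter (w + 1 ≤ ·)
  have hy : ∀ i, sCount y i = min (b + 1) (sCount x i) := fun i => by
    rw [sCount_filter_ge]
    rcases le_total i (w + 1) with h | h
    · rw [max_eq_right h, hw, min_eq_left (hw ▸ sCount_antitone x h)]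
    · rw [max_eq_left h, min_eq_right (hw ▸ sCount_antitone x h)]
  have htop : topSum x (b + 1) = y.sum := by
    rw [topSum, ← sum_sCount_Icc y fun a ha =>
      Multiset.le_sum_of_mem (Multiset.mem_of_mem_filter ha)]
    exact sum_congr rfl fun i _ => (hy i).symm
  rw [htop, (hx.filter _).sum_mod_two]
  congr 1

theorem isOrthogonal (hf : IsRowLengths x f) (hpos : ∀ a ∈ x, 0 < a)
    (hcorner : ∀ b, f (b + 1) < f b → topSum x (b + 1) % 2 = (b + 1) % 2) : IsOrthogonal x := by
  intro v hv
  rcases Nat.eq_zero_or_pos v with rfl | hv1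
  · rw [Multiset.count_eq_zero.mpr fun h => (hpos 0 h).false]
    exact Even.zero
  -- the rows of length `v` are those with index in `[a, b)`
  set a := sCount x (v + 1)
  set b := sCount x v
  have hcount : x.count v + a = b := (sCount_eq_rCount_add x v).symm
  have hblock : ∀ k, a ≤ k → k < b → f k = v := fun k hak hkb => by
    have := (hf v k hv1).mpr hkb
    have := (hf (v + 1) k (by omega)).not.mpr (by omega)
    omega
  obtain ⟨d, hd⟩ : ∃ d, b = a + d := ⟨b - a, by omega⟩
  have hsum : topSum x b = topSum x a + v * d := by
    rw [hf.topSum_eq, hf.topSum_eq, hd, sum_range_add,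
      sum_congr rfl fun j hj => hblock (a + j) (by omega) (by rw [mem_range] at hj; omega),
      sum_const, card_range, smul_eq_mul, mul_comm]
  rcases Nat.eq_zero_or_pos d with hd0 | hdpos
  · exact ⟨0, by omega⟩
  have hb : topSum x b % 2 = b % 2 := by
    obtain ⟨b', hb'⟩ : ∃ b', b = b' + 1 := ⟨b - 1, by omega⟩
    rw [hb']
    refine hcorner b' ?_
    have := (hf v (b' + 1) hv1).not.mpr (by omega)
    have := hblock b' (by omega) (by omega)
    omega
  have ha : topSum x a % 2 = a % 2 := by
    rcases Nat.eq_zero_or_pos a with ha0 | ha0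
    · rw [ha0, hf.topSum_eq, sum_range_zero]
    · obtain ⟨a', ha'⟩ : ∃ a', a = a' + 1 := ⟨a - 1, by omega⟩
      rw [ha']
      refine hcorner a' ?_
      have := (hf (v + 1) a' (by omega)).mpr (by omega)
      have := hblock (a' + 1) (by omega) (by omega)
      omega
  have hvd : v * d % 2 = 0 := by rw [Nat.mul_mod, hv, zero_mul, Nat.zero_mod]
  rw [Nat.even_iff]
  omega

theorem rCount_eq (hf : IsRowLengths x f) {i M : ℕ} (hi : 1 ≤ i) (hM : x.sum ≤ M) :
    rCount x i = #{k ∈ range M | f k = i} := by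
  have hsplit : #{k ∈ range M | f k = i} + #{k ∈ range M | i + 1 ≤ f k} =
      #{k ∈ range M | i ≤ f k} := by
    simp only [card_filter, ← sum_add_distrib]
    exact sum_congr rfl fun k _ => by split_ifs <;> omega
  rw [hf.card_filter_range hi, hf.card_filter_range (by omega),
    min_eq_right ((sCount_le_sum x hi).trans hM),
    min_eq_right ((sCount_le_sum x (by omega : 1 ≤ i + 1)).trans hM)] at hsplit
  have := sCount_eq_rCount_add x i
  omega

theorem sum_sCount_sq (hf : IsRowLengths x f) {M : ℕ} (hM : x.sum ≤ M) :
    ∑ i ∈ Icc 1 x.sum, sCount x i ^ 2 = ∑ k ∈ range M, (2 * k + 1) * f k :=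
  calc ∑ i ∈ Icc 1 x.sum, sCount x i ^ 2
      = ∑ i ∈ Icc 1 x.sum, ∑ k ∈ range M, ∑ l ∈ range M,
          if i ≤ min (f k) (f l) then 1 else 0 := by
        refine sum_congr rfl fun i hi => ?_
        have hi1 := (mem_Icc.mp hi).1
        rw [← min_eq_right ((sCount_le_sum x hi1).trans hM), ← hf.card_filter_range hi1,
          card_filter, sq, sum_mul_sum]
        exact sum_congr rfl fun k _ => sum_congr rfl fun l _ => by split_ifs <;> omega
    _ = ∑ k ∈ range M, ∑ l ∈ range M, ∑ i ∈ Icc 1 x.sum,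
          if i ≤ min (f k) (f l) then 1 else 0 := by
        rw [sum_comm]
        exact sum_congr rfl fun k _ => sum_comm
    _ = ∑ k ∈ range M, ∑ l ∈ range M, min (f k) (f l) :=
        sum_congr rfl fun k _ => sum_congr rfl fun l _ => by
          rw [sum_boole, card_filter_Icc_le ((min_le_left _ _).trans (hf.le_sum k)), Nat.cast_id]
    _ = ∑ k ∈ range M, (2 * k + 1) * f k := hf.antitone.sum_range_sum_range_min M

theorem sum_odd_rCount (hf : IsRowLengths x f) {M : ℕ} (hM : x.sum ≤ M) :
    ∑ i ∈ Icc 1 x.sum, (if i % 2 = 1 then rCount x i else 0) = #{k ∈ range M | f k % 2 = 1} :=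
  calc ∑ i ∈ Icc 1 x.sum, (if i % 2 = 1 then rCount x i else 0)
      = ∑ i ∈ Icc 1 x.sum, ∑ k ∈ range M, if f k = i then (if i % 2 = 1 then 1 else 0) else 0 := by
        refine sum_congr rfl fun i hi => ?_
        rw [hf.rCount_eq (mem_Icc.mp hi).1 hM, card_filter]
        split_ifs <;> simp
    _ = ∑ k ∈ range M, ∑ i ∈ Icc 1 x.sum,
          if f k = i then (if i % 2 = 1 then 1 else 0) else 0 := sum_comm
    _ = ∑ k ∈ range M, if f k % 2 = 1 then 1 else 0 := sum_congr rfl fun k _ => by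
        have := hf.le_sum k
        simp only [sum_ite_eq, mem_Icc]
        split_ifs <;> omega
    _ = #{k ∈ range M | f k % 2 = 1} := by rw [sum_boole, Nat.cast_id]

theorem dimD_eq (hf : IsRowLengths x f) {M : ℕ} (hM : x.sum ≤ M) :
    dimD x = ((x.sum : ℚ) ^ 2 - x.sum) / 2 - (∑ k ∈ range M, (2 * k + 1 : ℚ) * f k) / 2
      + (#{k ∈ range M | f k % 2 = 1} : ℚ) / 2 := by
  have hsq := congrArg (Nat.cast : ℕ → ℚ) (hf.sum_sCount_sq hM)
  have hodd := congrArg (Nat.cast : ℕ → ℚ) (hf.sum_odd_rCount hM)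
  push_cast at hsq hodd
  rw [dimD, hsq, hodd]

end IsRowLengths

theorem isRowLengths_of_sCount_eq {x : Multiset ℕ} {g : ℕ → ℕ} {B : ℕ} (hg : Antitone g)
    (hB : ∀ k, B ≤ k → g k = 0) (hx : ∀ i, 1 ≤ i → sCount x i = #{k ∈ range B | i ≤ g k}) :
    IsRowLengths x g := by
  intro i k hi
  rw [hx i hi]
  constructor
  · intro h
    have hkB : k < B := by by_contra; have := hB k (by omega); omega
    have hsub : range (k + 1) ⊆ {j ∈ range B | i ≤ g j} := fun j hj => by
      rw [mem_range] at hj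
      rw [mem_filter, mem_range]
      exact ⟨by omega, h.trans (hg (by omega))⟩
    simpa using card_le_card hsub
  · intro h
    by_contra hik
    have hsub : {j ∈ range B | i ≤ g j} ⊆ range k := fun j hj => by
      rw [mem_filter] at hj
      rw [mem_range]
      by_contra
      have := hg (show k ≤ j by omega)
      omega
    have := card_le_card hsub
    rw [card_range] at this
    omega

theorem sCount_map_range (g : ℕ → ℕ) (B i : ℕ) :
    sCount ((Multiset.range B).map g) i = #{k ∈ range B | i ≤ g k} := by
  rw [sCount, ← Multiset.countP_eq_card_filter, Multiset.countP_map]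
  rfl

/-- Column `k` (counting from `0`) of the Young diagram of `x`, i.e. row `k` of `transpose x`. -/
def colLen (x : Multiset ℕ) (k : ℕ) : ℕ := sCount x (k + 1)

def colSum (x : Multiset ℕ) (m : ℕ) : ℕ := ∑ k ∈ range m, colLen x k

/-- The number of boxes of the Young diagram of `x` to the right of its first `m` columns. -/
def tailSum (x : Multiset ℕ) (m : ℕ) : ℕ := (x.map (· - m)).sum

theorem colLen_antitone (x : Multiset ℕ) : Antitone (colLen x) := fun _ _ h =>
  sCount_antitone x (Nat.succ_le_succ h)

theorem colSum_succ (x : Multiset ℕ) (m : ℕ) : colSum x (m + 1) = colSum x m + colLen x m :=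
  sum_range_succ _ _

theorem colLen_eq_zero_of_maxPart_le {x : Multiset ℕ} {k : ℕ} (hk : maxPart x ≤ k) :
    colLen x k = 0 := by
  by_contra h
  obtain ⟨a, ha, hka⟩ := exists_mem_le_of_sCount_pos (Nat.pos_of_ne_zero h)
  have : a ≤ maxPart x := Multiset.le_sup ha
  omega

theorem colSum_add_tailSum (x : Multiset ℕ) (m : ℕ) : colSum x m + tailSum x m = x.sum := by
  induction x using Multiset.induction with
  | empty => simp [colSum, colLen, tailSum, sCount_zero]
  | cons a x ih =>
    have hcol : colSum (a ::ₘ x) m = colSum x m + min a m := by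
      simp only [colSum, colLen, sCount_cons, sum_add_distrib, sum_boole, Nat.cast_id]
      rw [show {k ∈ range m | k + 1 ≤ a} = range (min a m) by
        ext k; simp only [mem_filter, mem_range]; omega, card_range]
    simp only [tailSum, Multiset.map_cons, Multiset.sum_cons] at ih ⊢
    omega

theorem tailSum_zero (x : Multiset ℕ) : tailSum x 0 = x.sum := by
  simp [tailSum]

theorem tailSum_eq_zero {x : Multiset ℕ} {m : ℕ} (hm : ∀ a ∈ x, a ≤ m) : tailSum x m = 0 :=
  Multiset.sum_eq_zero fun b hb => by
    obtain ⟨a, ha, rfl⟩ := Multiset.mem_map.mp hb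
    exact Nat.sub_eq_zero_of_le (hm a ha)

theorem colSum_of_sum_le {x : Multiset ℕ} {m : ℕ} (hm : x.sum ≤ m) : colSum x m = x.sum := by
  have := colSum_add_tailSum x m
  rw [tailSum_eq_zero fun a ha => (Multiset.le_sum_of_mem ha).trans hm] at this
  omega

theorem tailSum_mod_two_of_forall_odd {y : Multiset ℕ} (hy : ∀ a ∈ y, a % 2 = 1) (m : ℕ) :
    tailSum y m % 2 = (m + 1) * sCount y (m + 1) % 2 := by
  induction y using Multiset.induction with
  | empty => rfl
  | cons a y ih =>
    have ha := hy a (Multiset.mem_cons_self a y)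
    have := ih fun b hb => hy b (Multiset.mem_cons_of_mem hb)
    simp only [tailSum, Multiset.map_cons, Multiset.sum_cons, sCount_cons] at this ⊢
    split_ifs with h
    · rw [Nat.mul_add, Nat.mul_one]
      omega
    · simp only [Nat.add_zero]
      omega

/-- Only the odd parts matter mod 2: the even parts of an orthogonal partition come in pairs. -/
theorem IsOrthogonal.tailSum_mod_two {x : Multiset ℕ} (hx : IsOrthogonal x) (m : ℕ) :
    tailSum x m % 2 = (m + 1) * sCount (oddParts x) (m + 1) % 2 := by
  have hodd := tailSum_mod_two_of_forall_odd (fun a ha => mod_two_of_mem_oddParts (x := x) ha) m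
  have heven := (even_sum_map_of_even_count _ (· - m) hx.even_count_evenParts).two_dvd
  have hsplit : tailSum x m = tailSum (oddParts x) m + tailSum (evenParts x) m := by
    rw [tailSum, tailSum, tailSum, ← Multiset.sum_add, ← Multiset.map_add, oddParts_add_evenParts]
  rw [hsplit]
  unfold tailSum at *
  omega

theorem IsOrthogonal.tailSum_mod_two_of_odd {x : Multiset ℕ} (hx : IsOrthogonal x) {m : ℕ}
    (hm : m % 2 = 1) : tailSum x m % 2 = 0 := by
  rw [hx.tailSum_mod_two, Nat.mul_mod, show (m + 1) % 2 = 0 by omega, zero_mul, Nat.zero_mod]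

theorem isRowLengths_transpose (x : Multiset ℕ) : IsRowLengths (transpose x) (colLen x) :=
  isRowLengths_of_sCount_eq (colLen_antitone x) (fun _ => colLen_eq_zero_of_maxPart_le)
    fun i _ => sCount_map_range _ _ i

theorem topSum_transpose (x : Multiset ℕ) (m : ℕ) : topSum (transpose x) m = colSum x m :=
  (isRowLengths_transpose x).topSum_eq m

theorem sum_transpose (x : Multiset ℕ) : (transpose x).sum = x.sum := by
  have := colSum_add_tailSum x (maxPart x)
  rw [tailSum_eq_zero (m := maxPart x) fun a ha => Multiset.le_sup ha] at this
  rw [← this]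
  rfl

/-- The number of boxes (`0` or `1`) by which the first `k` rows of the SO-collapse of
`transpose x` fall short of those of `transpose x`; see `topSum_bvDual`. -/
def defect (x : Multiset ℕ) (k : ℕ) : ℕ :=
  if 1 ≤ rCount (oddParts x) k ∨ sCount (oddParts x) k % 2 = 1 then 1 else 0

theorem defect_le_one (x : Multiset ℕ) (k : ℕ) : defect x k ≤ 1 := by
  unfold defect
  split <;> omega

theorem defect_eq_one_iff (x : Multiset ℕ) (k : ℕ) :
    defect x k = 1 ↔ 1 ≤ rCount (oddParts x) k ∨ sCount (oddParts x) k % 2 = 1 := by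
  unfold defect
  split <;> simp_all

theorem defect_eq_zero_of_sCount {x : Multiset ℕ} {k : ℕ} (h : sCount (oddParts x) k = 0) :
    defect x k = 0 := by
  have := sCount_eq_rCount_add (oddParts x) k
  have := defect_le_one x k
  have := defect_eq_one_iff x k
  omega

theorem defect_eq_zero_of_sum_lt {x : Multiset ℕ} {k : ℕ} (h : x.sum < k) : defect x k = 0 :=
  defect_eq_zero_of_sCount (Nat.eq_zero_of_le_zero
    ((sCount_filter_le x _ k).trans (sCount_eq_zero_of_sum_lt h).le))

theorem IsOrthogonal.defect_zero {x : Multiset ℕ} (hx : IsOrthogonal x) (heven : x.sum % 2 = 0) :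
    defect x 0 = 0 := by
  have htail := hx.tailSum_mod_two 0
  rw [tailSum_zero, zero_add, one_mul] at htail
  have : sCount (oddParts x) 0 = rCount (oddParts x) 0 + sCount (oddParts x) 1 :=
    sCount_eq_rCount_add _ 0
  have := rCount_oddParts_of_even x (k := 0) rfl
  have := defect_le_one x 0
  have := defect_eq_one_iff x 0
  omega

theorem defect_succ_le (x : Multiset ℕ) (k : ℕ) : defect x (k + 1) ≤ colLen x k + defect x k := by
  have := sCount_eq_rCount_add (oddParts x) (k + 1)
  have := sCount_filter_le x (· % 2 = 1) (k + 1)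
  have := defect_le_one x (k + 1)
  have := defect_eq_one_iff x (k + 1)
  unfold colLen oddParts at *
  omega

/-- The `k`-th row (counting from `0`) of the Barbasch–Vogan dual of `x`. -/
def bvDualRow (x : Multiset ℕ) (k : ℕ) : ℕ := colLen x k + defect x k - defect x (k + 1)

theorem bvDualRow_add_defect (x : Multiset ℕ) (k : ℕ) :
    bvDualRow x k + defect x (k + 1) = colLen x k + defect x k := by
  have := defect_succ_le x k
  unfold bvDualRow
  omega

theorem sum_bvDualRow_add_defect {x : Multiset ℕ} (h0 : defect x 0 = 0) (m : ℕ) :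
    ∑ k ∈ range m, bvDualRow x k + defect x m = colSum x m := by
  induction m with
  | zero => simp [h0, colSum]
  | succ m ih =>
    have := bvDualRow_add_defect x m
    rw [sum_range_succ, colSum_succ, ← ih]
    omega

theorem bvDualRow_antitone (x : Multiset ℕ) : Antitone (bvDualRow x) := by
  refine antitone_nat_of_succ_le fun k => ?_
  have := bvDualRow_add_defect x k
  have := bvDualRow_add_defect x (k + 1)
  have := sCount_eq_rCount_add x (k + 1)
  have := sCount_eq_rCount_add (oddParts x) k
  have := sCount_eq_rCount_add (oddParts x) (k + 1)
  have := rCount_oddParts_le x (k + 1)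
  have := defect_le_one x k
  have := defect_le_one x (k + 1)
  have := defect_le_one x (k + 1 + 1)
  have := defect_eq_one_iff x k
  have := defect_eq_one_iff x (k + 1)
  have := defect_eq_one_iff x (k + 1 + 1)
  unfold colLen at *
  omega

/-- For even `i + 1` this holds at every `i`; for odd `i + 1`, `defect x (i + 1) = 0` would make
rows `i` and `i + 1` equal. -/
theorem IsOrthogonal.colSum_add_defect_mod_two_of_lt {x : Multiset ℕ} (hx : IsOrthogonal x)
    (heven : x.sum % 2 = 0) {i : ℕ} (h : bvDualRow x (i + 1) < bvDualRow x i) :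
    (colSum x (i + 1) + defect x (i + 1)) % 2 = (i + 1) % 2 := by
  have hN := colSum_add_tailSum x (i + 1)
  have := defect_le_one x (i + 1)
  have := defect_eq_one_iff x (i + 1)
  have := sCount_eq_rCount_add (oddParts x) (i + 1)
  rcases Nat.mod_two_eq_zero_or_one (i + 1) with hi | hi
  · have htail := hx.tailSum_mod_two (i + 1)
    rw [Nat.mul_mod, show (i + 1 + 1) % 2 = 1 by omega, one_mul, Nat.mod_mod] at htail
    have := rCount_oddParts_of_even x hi
    omega
  · have htail := hx.tailSum_mod_two_of_odd hi
    suffices defect x (i + 1) = 1 by omega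
    by_contra hne
    have := bvDualRow_add_defect x i
    have := bvDualRow_add_defect x (i + 1)
    have := sCount_eq_rCount_add x (i + 1)
    have := sCount_eq_rCount_add (oddParts x) i
    have := rCount_oddParts_of_odd x hi
    have := rCount_oddParts_of_even x (k := i) (by omega)
    have := rCount_oddParts_of_even x (k := i + 1 + 1) (by omega)
    have := defect_le_one x i
    have := defect_le_one x (i + 1 + 1)
    have := defect_eq_one_iff x i
    have := defect_eq_one_iff x (i + 1 + 1)
    unfold colLen at *
    omega

theorem bvDualRow_eq_zero_of_sum_lt {x : Multiset ℕ} {k : ℕ} (hk : x.sum < k) :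
    bvDualRow x k = 0 := by
  have := sCount_eq_zero_of_sum_lt (show x.sum < k + 1 by omega)
  have := defect_eq_zero_of_sum_lt hk
  unfold bvDualRow colLen
  omega

def bvDual (x : Multiset ℕ) : Multiset ℕ :=
  ((Multiset.range (x.sum + 1)).map (bvDualRow x)).filter (0 < ·)

theorem isRowLengths_bvDual (x : Multiset ℕ) : IsRowLengths (bvDual x) (bvDualRow x) := by
  refine isRowLengths_of_sCount_eq (bvDualRow_antitone x)
    (fun k hk => bvDualRow_eq_zero_of_sum_lt hk) fun i hi => ?_
  rw [← sCount_map_range, bvDual, sCount, sCount, Multiset.filter_filter]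
  congr 1
  exact Multiset.filter_congr fun a _ => by omega

theorem sum_bvDual {x : Multiset ℕ} (hx : IsOrthogonal x) (heven : x.sum % 2 = 0) :
    (bvDual x).sum = x.sum := by
  set rows := (Multiset.range (x.sum + 1)).map (bvDualRow x)
  have hzero : (rows.filter fun a => ¬ 0 < a).sum = 0 :=
    Multiset.sum_eq_zero fun a ha => by have := (Multiset.mem_filter.mp ha).2; omega
  have hrows := sum_bvDualRow_add_defect (hx.defect_zero heven) (x.sum + 1)
  rw [defect_eq_zero_of_sum_lt (Nat.lt_succ_self _), colSum_of_sum_le (Nat.le_succ _)] at hrows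
  calc (bvDual x).sum = (bvDual x).sum + (rows.filter fun a => ¬ 0 < a).sum := by
        rw [hzero, add_zero]
    _ = rows.sum := by rw [bvDual, ← Multiset.sum_add, Multiset.filter_add_not]
    _ = x.sum := hrows

theorem topSum_bvDual {x : Multiset ℕ} (hx : IsOrthogonal x) (heven : x.sum % 2 = 0) (m : ℕ) :
    topSum (bvDual x) m + defect x m = colSum x m := by
  rw [(isRowLengths_bvDual x).topSum_eq]
  exact sum_bvDualRow_add_defect (hx.defect_zero heven) m

theorem isOrthogonal_bvDual {x : Multiset ℕ} (hx : IsOrthogonal x) (heven : x.sum % 2 = 0) :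
    IsOrthogonal (bvDual x) := by
  refine (isRowLengths_bvDual x).isOrthogonal (fun a ha => (Multiset.mem_filter.mp ha).2)
    fun b hb => ?_
  have := topSum_bvDual hx heven (b + 1)
  have := hx.colSum_add_defect_mod_two_of_lt heven hb
  omega

section UpperBound

variable {x e : Multiset ℕ} {f : ℕ → ℕ}

theorem rows_eq_colLen_of_topSum_eq (hf : IsRowLengths e f) (he : IsOrthogonal e)
    (hdom : ∀ m, topSum e m ≤ colSum x m) {j : ℕ} (heq : topSum e (j + 1) = colSum x (j + 1))
    (hpar : colSum x (j + 1) % 2 ≠ (j + 1) % 2) :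
    f j = colLen x j ∧ f (j + 1) = colLen x j ∧ colLen x (j + 1) = colLen x j := by
  have hflat : f (j + 1) = f j := by
    by_contra hne
    exact hpar (heq ▸ hf.topSum_mod_two_of_lt he (lt_of_le_of_ne (hf.antitone j.le_succ) hne))
  have h0 := hdom j
  have h2 := hdom (j + 1 + 1)
  rw [hf.topSum_eq] at heq h0 h2
  rw [sum_range_succ] at heq
  rw [sum_range_succ, sum_range_succ] at h2
  have := colSum_succ x j
  have := colSum_succ x (j + 1)
  have := colLen_antitone x (Nat.le_add_right j 1)
  omega

theorem topSum_succ_eq (hf : IsRowLengths e f) {k : ℕ} (heq : topSum e k = colSum x k)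
    (hk : f k = colLen x k) : topSum e (k + 1) = colSum x (k + 1) := by
  rw [hf.topSum_eq, sum_range_succ, ← hf.topSum_eq, heq, hk, colSum_succ]

variable (hx : IsOrthogonal x) (heven : x.sum % 2 = 0) (hf : IsRowLengths e f)
  (he : IsOrthogonal e) (hdom : ∀ m, topSum e m ≤ colSum x m)
include hx heven hf he hdom

/-- Parity rules out a corner of `e` at `k` and then at `k + 1`, which pins rows `k - 1`, `k`,
`k + 1` of `e` to the corresponding columns of `x`. -/
theorem topSum_eq_add_two_of_tailSum_odd {k : ℕ} (hk : k % 2 = 0)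
    (heq : topSum e k = colSum x k) (hodd : tailSum x k % 2 = 1) :
    topSum e (k + 2) = colSum x (k + 2) ∧ tailSum x (k + 2) % 2 = 1 ∧
      tailSum x (k + 2) < tailSum x k := by
  obtain ⟨j, rfl⟩ : ∃ j, k = j + 1 := ⟨k - 1, by
    have : k ≠ 0 := by rintro rfl; rw [tailSum_zero] at hodd; omega
    omega⟩
  have ht1 := colSum_add_tailSum x (j + 1)
  have ht2 := colSum_add_tailSum x (j + 1 + 1)
  have ht3 : colSum x (j + 1 + 2) + tailSum x (j + 1 + 2) = x.sum := colSum_add_tailSum x _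
  have hs2 := colSum_succ x (j + 1)
  have hs3 : colSum x (j + 1 + 2) = colSum x (j + 1 + 1) + colLen x (j + 1 + 1) :=
    colSum_succ x _
  have hodd2 := hx.tailSum_mod_two_of_odd (m := j + 1 + 1) (by omega)
  obtain ⟨-, hf1, hc1⟩ := rows_eq_colLen_of_topSum_eq hf he hdom heq (by omega)
  have heq2 := topSum_succ_eq hf heq (hf1.trans hc1.symm)
  obtain ⟨-, hf2, hc2⟩ := rows_eq_colLen_of_topSum_eq hf he hdom heq2 (by omega)
  exact ⟨topSum_succ_eq hf heq2 (hf2.trans hc2.symm), by omega, by omega⟩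

theorem tailSum_even_of_topSum_eq {k : ℕ} (hk : k % 2 = 0) (heq : topSum e k = colSum x k) :
    tailSum x k % 2 = 0 := by
  induction hT : tailSum x k using Nat.strong_induction_on generalizing k with
  | _ t ih =>
    by_contra hodd
    obtain ⟨heq', hodd', hlt⟩ :=
      topSum_eq_add_two_of_tailSum_odd hx heven hf he hdom hk heq (by omega)
    have := ih _ (hT ▸ hlt) (by omega) heq' rfl
    omega

theorem topSum_add_defect_le (m : ℕ) : topSum e m + defect x m ≤ colSum x m := by
  have := defect_le_one x m
  have := defect_eq_one_iff x m
  have := hdom m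
  by_contra hlt
  have heq : topSum e m = colSum x m := by omega
  have := sCount_eq_rCount_add (oddParts x) m
  rcases Nat.mod_two_eq_zero_or_one m with hm | hm
  · have htail := hx.tailSum_mod_two m
    rw [Nat.mul_mod, show (m + 1) % 2 = 1 by omega, one_mul, Nat.mod_mod] at htail
    have := rCount_oddParts_of_even x hm
    have := tailSum_even_of_topSum_eq hx heven hf he hdom hm heq
    omega
  · -- rows `m - 1` and `m` of `e` are equal, so `m` is not a part of `x`
    -- and `defect x m = 1` makes `tailSum x (m - 1)` odd
    obtain ⟨j, rfl⟩ : ∃ j, m = j + 1 := ⟨m - 1, by omega⟩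
    have htail := hx.tailSum_mod_two j
    rw [Nat.mul_mod, show (j + 1) % 2 = 1 by omega, one_mul, Nat.mod_mod] at htail
    have := hx.tailSum_mod_two_of_odd hm
    have := colSum_add_tailSum x j
    have := colSum_add_tailSum x (j + 1)
    have := colSum_add_tailSum x (j + 1 + 1)
    have := colSum_succ x j
    have := colSum_succ x (j + 1)
    obtain ⟨-, hf1, hc1⟩ := rows_eq_colLen_of_topSum_eq hf he hdom heq (by omega)
    have := sCount_eq_rCount_add x (j + 1)
    have := rCount_oddParts_of_odd x hm
    have := tailSum_even_of_topSum_eq hx heven hf he hdom (k := j + 1 + 1) (by omega)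
      (topSum_succ_eq hf heq (hf1.trans hc1.symm))
    unfold colLen at *
    omega

end UpperBound

theorem IsSOCollapse.topSum_eq {p c c' : Multiset ℕ} (hc : IsSOCollapse p c)
    (hc' : IsSOCollapse p c') (m : ℕ) : topSum c m = topSum c' m :=
  le_antisymm (hc'.2.2.2 c hc.1 hc.2.1 hc.2.2.1 m) (hc.2.2.2 c' hc'.1 hc'.2.1 hc'.2.2.1 m)

theorem isSOCollapse_bvDual {x : Multiset ℕ} (hx : IsOrthogonal x) (heven : x.sum % 2 = 0) :
    IsSOCollapse (transpose x) (bvDual x) := by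
  refine ⟨⟨fun a ha => (Multiset.mem_filter.mp ha).2, by rw [sum_bvDual hx heven, sum_transpose]⟩,
    isOrthogonal_bvDual hx heven, fun m => ?_, fun e _ he hdom m => ?_⟩
  · have := topSum_bvDual hx heven m
    rw [topSum_transpose]
    omega
  · have := topSum_add_defect_le hx heven (isRowLengths_rowLengths e) he
      (fun m => topSum_transpose x m ▸ hdom m) m
    have := topSum_bvDual hx heven m
    omega

theorem isRowLengths_of_isSOCollapse {x c : Multiset ℕ} (hx : IsOrthogonal x)
    (heven : x.sum % 2 = 0) (hc : IsSOCollapse (transpose x) c) : IsRowLengths c (bvDualRow x) :=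
  (isRowLengths_rowLengths c).of_topSum_eq fun m => by
    rw [hc.topSum_eq (isSOCollapse_bvDual hx heven), (isRowLengths_bvDual x).topSum_eq]

theorem sum_mul_bvDualRow {x : Multiset ℕ} (h0 : defect x 0 = 0) (M : ℕ) :
    ∑ k ∈ range M, (2 * k + 1 : ℚ) * bvDualRow x k =
      ∑ k ∈ range M, (2 * k + 1 : ℚ) * colLen x k + 2 * ∑ k ∈ range M, (defect x k : ℚ)
        - (2 * M - 1) * defect x M := by
  induction M with
  | zero => simp [h0]
  | succ M ih =>
    have hrow : (bvDualRow x M : ℚ) = colLen x M + defect x M - defect x (M + 1) := by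
      rw [eq_sub_iff_add_eq]
      exact_mod_cast bvDualRow_add_defect x M
    rw [sum_range_succ, sum_range_succ, sum_range_succ, ih, hrow]
    push_cast
    ring

/-- `(|x|² - |x|) / 2 - dim_D` of the Barbasch–Vogan dual of `x`
(see `sub_dimD_eq_dualCodim`), written so that it is additive over odd and even parts. -/
def dualCodim (x : Multiset ℕ) (M : ℕ) : ℚ :=
  (∑ k ∈ range M, (2 * k + 1 : ℚ) * colLen x k) / 2 + ∑ k ∈ range M, (defect x k : ℚ)
    - (#{k ∈ range M | bvDualRow x k % 2 = 1} : ℚ) / 2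

theorem sub_dimD_eq_dualCodim {x c : Multiset ℕ} (hx : IsOrthogonal x) (heven : x.sum % 2 = 0)
    (hc : IsSOCollapse (transpose x) c) {M : ℕ} (hM : x.sum < M) :
    ((x.sum : ℚ) ^ 2 - x.sum) / 2 - dimD c = dualCodim x M := by
  have hcsum : c.sum = x.sum := hc.1.2.trans (sum_transpose x)
  rw [(isRowLengths_of_isSOCollapse hx heven hc).dimD_eq (hcsum.trans_lt hM).le, hcsum,
    sum_mul_bvDualRow (hx.defect_zero heven), defect_eq_zero_of_sum_lt hM, dualCodim]
  push_cast
  ring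

theorem colLen_oddParts_add_evenParts (x : Multiset ℕ) (k : ℕ) :
    colLen (oddParts x) k + colLen (evenParts x) k = colLen x k := by
  rw [colLen, colLen, ← sCount_add, oddParts_add_evenParts, colLen]

theorem defect_oddParts (x : Multiset ℕ) : defect (oddParts x) = defect x := by
  have : oddParts (oddParts x) = oddParts x := by
    simp only [oddParts, Multiset.filter_filter, and_self]
  funext k
  rw [defect, defect, this]

theorem defect_evenParts (x : Multiset ℕ) (k : ℕ) : defect (evenParts x) k = 0 := by
  have : oddParts (evenParts x) = 0 :=
    Multiset.filter_eq_nil.mpr fun a ha h => by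
      have := (Multiset.mem_filter.mp ha).2
      omega
  exact defect_eq_zero_of_sCount (by rw [this]; rfl)

theorem IsOrthogonal.colLen_evenParts_mod_two {x : Multiset ℕ} (hx : IsOrthogonal x) (k : ℕ) :
    colLen (evenParts x) k % 2 = 0 := by
  refine Nat.even_iff.mp (even_card_of_even_count _ fun v => ?_)
  rw [Multiset.count_filter]
  split_ifs
  · exact hx.even_count_evenParts v
  · exact Even.zero

theorem IsOrthogonal.bvDualRow_mod_two {x : Multiset ℕ} (hx : IsOrthogonal x) (k : ℕ) :
    bvDualRow x k % 2 = bvDualRow (oddParts x) k % 2 := by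
  have := bvDualRow_add_defect x k
  have := bvDualRow_add_defect (oddParts x) k
  have := colLen_oddParts_add_evenParts x k
  have := hx.colLen_evenParts_mod_two k
  rw [defect_oddParts] at *
  omega

theorem IsOrthogonal.bvDualRow_evenParts_mod_two {x : Multiset ℕ} (hx : IsOrthogonal x)
    (k : ℕ) : bvDualRow (evenParts x) k % 2 = 0 := by
  have hrow := bvDualRow_add_defect (evenParts x) k
  have := hx.colLen_evenParts_mod_two k
  rw [defect_evenParts, defect_evenParts] at hrow
  omega

theorem IsOrthogonal.dualCodim_eq_add {x : Multiset ℕ} (hx : IsOrthogonal x) (M : ℕ) :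
    dualCodim x M = dualCodim (oddParts x) M + dualCodim (evenParts x) M := by
  have hcol : ∑ k ∈ range M, (2 * k + 1 : ℚ) * colLen x k =
      ∑ k ∈ range M, (2 * k + 1 : ℚ) * colLen (oddParts x) k
        + ∑ k ∈ range M, (2 * k + 1 : ℚ) * colLen (evenParts x) k := by
    rw [← sum_add_distrib]
    refine sum_congr rfl fun k _ => ?_
    rw [← colLen_oddParts_add_evenParts x k]
    push_cast
    ring
  have hodd : #{k ∈ range M | bvDualRow x k % 2 = 1} =
      #{k ∈ range M | bvDualRow (oddParts x) k % 2 = 1} := by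
    simp only [hx.bvDualRow_mod_two]
  have heven : #{k ∈ range M | bvDualRow (evenParts x) k % 2 = 1} = 0 := by
    simp [hx.bvDualRow_evenParts_mod_two]
  simp only [dualCodim, defect_oddParts, defect_evenParts, hcol, hodd, heven, Nat.cast_zero,
    sum_const_zero]
  ring

/-- the `SO_{2n}` case of the dimension identity for nilpotent orbits.
`p` is an orthogonal partition of `2n`, `q` (resp. `s`) its odd-part (resp. even-part)
subpartition, with `|q| = 2n₁`, `|s| = 2n₂`.  `c` is the `SO_{2n}`-collapse of `p^t`
(the Barbasch–Vogan dual of `p`), `cq` the `SO_{2n₁}`-collapse of `q^t`, and `cs` the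
`SO_{2n₂}`-collapse of `s^t`. -/
theorem dimension_identity_SO_even (n n₁ n₂ : ℕ) (p : Multiset ℕ)
    (hp : IsPartitionOf p (2 * n)) (horth : IsOrthogonal p)
    (hq : (p.filter fun a => a % 2 = 1).sum = 2 * n₁)
    (hs : (p.filter fun a => a % 2 = 0).sum = 2 * n₂)
    (c cq cs : Multiset ℕ)
    (hc : IsSOCollapse (transpose p) c)
    (hcq : IsSOCollapse (transpose (p.filter fun a => a % 2 = 1)) cq)
    (hcs : IsSOCollapse (transpose (p.filter fun a => a % 2 = 0)) cs) :
    (2 * (n : ℚ) ^ 2 - n) - dimD c =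
      (2 * (n₁ : ℚ) ^ 2 - n₁) + (2 * (n₂ : ℚ) ^ 2 - n₂) - dimD cq - dimD cs := by
  change (oddParts p).sum = 2 * n₁ at hq
  change (evenParts p).sum = 2 * n₂ at hs
  change IsSOCollapse (transpose (oddParts p)) cq at hcq
  change IsSOCollapse (transpose (evenParts p)) cs at hcs
  obtain ⟨-, hN⟩ := hp
  have hsplit : 2 * n₁ + 2 * n₂ = 2 * n := by
    rw [← hq, ← hs, ← hN, ← Multiset.sum_add, oddParts_add_evenParts]
  have key := horth.dualCodim_eq_add (2 * n + 1)
  rw [← sub_dimD_eq_dualCodim horth (by omega) hc (by omega),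
    ← sub_dimD_eq_dualCodim (x := oddParts p) (horth.filter _) (by omega) hcq (by omega),
    ← sub_dimD_eq_dualCodim (x := evenParts p) (horth.filter _) (by omega) hcs (by omega),
    hN, hq, hs] at key
  push_cast at key
  linear_combination key

end JiangWF
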